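/- arXiv:2001.00234 — 2 statements merged into one kernel-verified Lean document; each statement's English description precedes it below -/
import Mathlib

section
/- Fix N, fields h : Fin N → ℝ, couplings J : Fin N → Fin N → ℝ, and a distinguished spin configuration z₀ ∈ {-1,1}^N. Then the sum of the Ising energies E(z) over all spin configurations z ∈ {-1,1}^N with z ≠ z₀ equals -E(z₀). -/
/-- The Ising energy of a spin configuration `z` for local fields `h` and couplings `J`:
`E(z) = ∑ i, h i * z i + ∑ i, ∑ j > i, J i j * z i * z j`. -/
noncomputable def isingEnergy {N : ℕ} (h : Fin N → ℝ) (J : Fin N → Fin N → ℝ)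
    (z : Fin N → ℝ) : ℝ :=
  ∑ i, h i * z i + ∑ i, ∑ j ∈ Finset.univ.filter (fun j => i < j), J i j * z i * z j

/-- The finite set of all spin configurations `z : Fin N → ℝ` with `z i ∈ {-1, 1}`. -/
noncomputable def spinConfigs (N : ℕ) : Finset (Fin N → ℝ) :=
  Fintype.piFinset fun _ => ({-1, 1} : Finset ℝ)

/-!
Flipping the `i`-th spin is a fixed-point-free involution of `{-1,1}^N` which negates `z i` and,
for `j ≠ i`, the product `z i * z j`. Hence every monomial of the energy sums to zero over all
configurations, the total energy sums to zero, and removing `z₀` from the sum leaves `-E(z₀)`.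
-/

open Finset Function

section SpinFlip

variable {ι : Type*} [DecidableEq ι] {z : ι → ℝ}

theorem update_neg_ne_self {i : ι} (hzi : z i ∈ ({-1, 1} : Finset ℝ)) : update z i (-z i) ≠ z := by
  intro hflip
  have hneg : -z i = z i := by simpa using congrFun hflip i
  simp [self_eq_neg.mp hneg.symm] at hzi

variable [Fintype ι]

theorem update_neg_mem_piFinset (hz : z ∈ Fintype.piFinset fun _ : ι => ({-1, 1} : Finset ℝ))
    (i : ι) : update z i (-z i) ∈ Fintype.piFinset fun _ : ι => ({-1, 1} : Finset ℝ) := by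
  rw [Fintype.mem_piFinset] at hz ⊢
  intro j
  rcases eq_or_ne j i with rfl | hji
  · have hzj := hz j
    simp only [mem_insert, mem_singleton] at hzj
    rcases hzj with hzj | hzj <;> simp [hzj]
  · simpa [update_of_ne hji] using hz j

theorem sum_piFinset_spins_eq_zero_of_update_neg {M : Type*} [AddCommGroup M] (i : ι)
    (f : (ι → ℝ) → M) (hf : ∀ z, f (update z i (-z i)) = -f z) :
    ∑ z ∈ Fintype.piFinset (fun _ : ι => ({-1, 1} : Finset ℝ)), f z = 0 := by
  refine sum_involution (fun z _ => update z i (-z i)) (fun z _ => by rw [hf, add_neg_cancel])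
    (fun z hz _ => update_neg_ne_self (Fintype.mem_piFinset.mp hz i))
    (fun z hz => update_neg_mem_piFinset hz i) (fun z _ => ?_)
  simp

theorem sum_piFinset_spins_apply (i : ι) :
    ∑ z ∈ Fintype.piFinset (fun _ : ι => ({-1, 1} : Finset ℝ)), z i = 0 :=
  sum_piFinset_spins_eq_zero_of_update_neg i _ fun z => by simp

theorem sum_piFinset_spins_mul_apply {i j : ι} (hij : i ≠ j) :
    ∑ z ∈ Fintype.piFinset (fun _ : ι => ({-1, 1} : Finset ℝ)), z i * z j = 0 :=
  sum_piFinset_spins_eq_zero_of_update_neg i _ fun z => by simp [update_of_ne hij.symm]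

end SpinFlip

theorem sum_isingEnergy_spinConfigs (N : ℕ) (h : Fin N → ℝ) (J : Fin N → Fin N → ℝ) :
    ∑ z ∈ spinConfigs N, isingEnergy h J z = 0 := by
  have hfield (i : Fin N) : ∑ z ∈ spinConfigs N, h i * z i = 0 := by
    rw [← mul_sum, spinConfigs, sum_piFinset_spins_apply, mul_zero]
  have hcoupling (i j : Fin N) (hij : i < j) : ∑ z ∈ spinConfigs N, J i j * z i * z j = 0 := by
    simp_rw [mul_assoc]
    rw [← mul_sum, spinConfigs, sum_piFinset_spins_mul_apply hij.ne, mul_zero]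
  simp only [isingEnergy, sum_add_distrib]
  rw [sum_comm, sum_eq_zero fun i _ => hfield i, zero_add, sum_comm]
  refine sum_eq_zero fun i _ => ?_
  rw [sum_comm]
  exact sum_eq_zero fun j hj => hcoupling i j (mem_filter.mp hj).2

/-- The sum of the Ising energies over all spin configurations different from a distinguished
configuration `z₀ ∈ {-1,1}^N` equals the negation of the energy of `z₀`. -/
theorem sum_isingEnergy_ne_eq_neg (N : ℕ) (h : Fin N → ℝ) (J : Fin N → Fin N → ℝ)
    (z₀ : Fin N → ℝ) (hz₀ : z₀ ∈ spinConfigs N) :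
    ∑ z ∈ (spinConfigs N).filter (fun z => z ≠ z₀), isingEnergy h J z =
      -isingEnergy h J z₀ := by
  classical
  rw [filter_ne', sum_erase_eq_sub hz₀, sum_isingEnergy_spinConfigs, zero_sub]
end

section
/- Fix N, fields h : Fin N → ℝ, couplings J : Fin N → Fin N → ℝ, a distinguished spin configuration z₀ ∈ {-1,1}^N (the infeasible state), and a real number D. Then D ≥ ∑_{z ∈ {-1,1}^N, z ≠ z₀} E_{h,J}(z) holds if and only if D ≥ -E_{h,J}(z₀). -/
/-! Flipping one spin is a fixed-point-free involution of `spinConfigs N` that negates every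
monomial containing that spin, so all such monomials sum to zero over `spinConfigs N`; the energy
is a combination of monomials of degree one and two, hence sums to zero (Theorem 2 of the paper). -/

namespace spinConfigs

variable {N : ℕ}

lemma mem_iff {z : Fin N → ℝ} : z ∈ spinConfigs N ↔ ∀ i, z i = -1 ∨ z i = 1 := by
  simp [spinConfigs]

def flipSpin (i : Fin N) (z : Fin N → ℝ) : Fin N → ℝ :=
  Function.update z i (-z i)

lemma flipSpin_flipSpin (i : Fin N) (z : Fin N → ℝ) : flipSpin i (flipSpin i z) = z := by
  simp [flipSpin]

lemma flipSpin_mem {z : Fin N → ℝ} (hz : z ∈ spinConfigs N) (i : Fin N) :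
    flipSpin i z ∈ spinConfigs N := by
  rw [mem_iff] at hz ⊢
  intro k
  rcases eq_or_ne k i with rfl | hk
  · rcases hz k with hzk | hzk <;> simp [flipSpin, hzk]
  · simpa [flipSpin, Function.update_of_ne hk] using hz k

lemma flipSpin_ne {z : Fin N → ℝ} (hz : z ∈ spinConfigs N) (i : Fin N) : flipSpin i z ≠ z := by
  intro hfix
  have hzi : -z i = z i := by simpa [flipSpin] using congrFun hfix i
  rcases mem_iff.mp hz i with h | h <;> rw [h] at hzi <;> norm_num at hzi

lemma sum_eq_zero_of_flipSpin {f : (Fin N → ℝ) → ℝ} (i : Fin N)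
    (hf : ∀ z ∈ spinConfigs N, f (flipSpin i z) = -f z) : ∑ z ∈ spinConfigs N, f z = 0 :=
  Finset.sum_involution (fun z _ => flipSpin i z)
    (fun z hz => by rw [hf z hz, add_neg_cancel])
    (fun z hz _ => flipSpin_ne hz i)
    (fun z hz => flipSpin_mem hz i)
    (fun z _ => flipSpin_flipSpin i z)

lemma sum_spin (i : Fin N) : ∑ z ∈ spinConfigs N, z i = 0 :=
  sum_eq_zero_of_flipSpin i fun z _ => by simp [flipSpin]

lemma sum_spin_mul_spin {i j : Fin N} (hij : i ≠ j) : ∑ z ∈ spinConfigs N, z i * z j = 0 :=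
  sum_eq_zero_of_flipSpin i fun z _ => by
    simp [flipSpin, Function.update_of_ne hij.symm]

theorem sum_isingEnergy (h : Fin N → ℝ) (J : Fin N → Fin N → ℝ) :
    ∑ z ∈ spinConfigs N, isingEnergy h J z = 0 := by
  have hfield : ∀ i, ∑ z ∈ spinConfigs N, h i * z i = 0 := fun i => by
    rw [← Finset.mul_sum, sum_spin, mul_zero]
  have hcoupling : ∀ i j, i < j → ∑ z ∈ spinConfigs N, J i j * z i * z j = 0 := fun i j hij => by
    simp_rw [mul_assoc, ← Finset.mul_sum, sum_spin_mul_spin hij.ne, mul_zero]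
  simp only [isingEnergy, Finset.sum_add_distrib]
  rw [Finset.sum_comm, Finset.sum_eq_zero fun i _ => hfield i, zero_add, Finset.sum_comm]
  refine Finset.sum_eq_zero fun i _ => ?_
  rw [Finset.sum_comm]
  exact Finset.sum_eq_zero fun j hj => hcoupling i j (Finset.mem_filter.mp hj).2

end spinConfigs

/-- The constraint `D ≥ ∑_{z ≠ z₀} E(z)` (sum over all feasible states) is equivalent to the
single linear constraint `D ≥ -E(z₀)`, where `z₀` is the distinguished (infeasible) state. -/
theorem feasible_sum_constraint_iff (N : ℕ) (h : Fin N → ℝ) (J : Fin N → Fin N → ℝ)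
    (z₀ : Fin N → ℝ) (hz₀ : z₀ ∈ spinConfigs N) (D : ℝ) :
    (D ≥ ∑ z ∈ (spinConfigs N).filter (fun z => z ≠ z₀), isingEnergy h J z) ↔
      D ≥ -isingEnergy h J z₀ := by
  rw [Finset.filter_ne', Finset.sum_erase_eq_sub hz₀, spinConfigs.sum_isingEnergy, zero_sub]
end
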